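/- arXiv:2507.14720 — 2 statements merged into one kernel-verified Lean document; each statement's English description precedes it below -/
import Mathlib

section
/- Fix integers g ≥ 2 and r ≥ 3. Let M be a simple matroid of rank r with r + g·C(r, 2) elements in which every rank-h flat has at most h + g·C(h, 2) elements, and every rank-h flat F with 2 < h < r satisfies |F| = h + g·C(h, 2) or |F| ≤ h + g·C(h−1, 2). Then M has at most r hyperplanes of size (r−1) + g·C(r−1, 2). -/
open Set Matroid
open scoped Matroid

namespace MatroidPaper

variable {α : Type*} {β : Type*}

/-- A circuit of a matroid is a minimal dependent set. -/
def Circuit (M : Matroid α) (C : Set α) : Prop := Minimal M.Dep C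

/-- A set is cyclic if it is a union of circuits. -/
def Cyclic (M : Matroid α) (X : Set α) : Prop :=
  ∃ S : Set (Set α), (∀ C ∈ S, Circuit M C) ∧ X = ⋃₀ S

/-- A cyclic flat is a flat that is a union of circuits. -/
def CyclicFlat (M : Matroid α) (F : Set α) : Prop := M.IsFlat F ∧ Cyclic M F

/-- The rank of a set in a matroid: the supremum of sizes of independent subsets. -/
noncomputable def rk (M : Matroid α) (X : Set α) : ℕ :=
  sSup {n | ∃ I, I ⊆ X ∧ M.Indep I ∧ I.ncard = n}

/-- `e` is a loop of `M`. -/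
def Loop (M : Matroid α) (e : α) : Prop := M.Dep {e}

/-- `e` is a coloop of `M`, i.e. a loop of the dual. -/
def Coloop (M : Matroid α) (e : α) : Prop := M✶.Dep {e}

/-- Deletion of a set of elements. -/
def delete (M : Matroid α) (D : Set α) : Matroid α := M ↾ (M.E \ D)

/-- Contraction of a set of elements. -/
def contract (M : Matroid α) (C : Set α) : Matroid α := (delete M✶ C)✶

open Classical in
/-- The Tutte polynomial of a (finite) matroid, as a polynomial in two
variables `X 0` (usually `x`) and `X 1` (usually `y`). -/
noncomputable def tutte (M : Matroid α) : MvPolynomial (Fin 2) ℤ :=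
  if hE : M.E.Finite then
    ∑ A ∈ hE.toFinset.powerset,
      (MvPolynomial.X 0 - 1) ^ (rk M M.E - rk M ↑A) *
        (MvPolynomial.X 1 - 1) ^ (A.card - rk M ↑A)
  else 0

/-- The coefficient of `x^i y^j` in the Tutte polynomial. -/
noncomputable def tcoeff (M : Matroid α) (i j : ℕ) : ℤ :=
  MvPolynomial.coeff (Finsupp.single 0 i + Finsupp.single 1 j) (tutte M)

/-- Matroid isomorphism. -/
def Iso (M : Matroid α) (N : Matroid β) : Prop :=
  ∃ (f : α → β) (hf : Set.InjOn f M.E), M.map f hf = N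

/-- A matroid is connected if it is nonempty and every two distinct elements
lie in a common circuit. -/
def Connected (M : Matroid α) : Prop :=
  M.E.Nonempty ∧ ∀ ⦃e f⦄, e ∈ M.E → f ∈ M.E → e ≠ f →
    ∃ C, Circuit M C ∧ e ∈ C ∧ f ∈ C

/-- The connected component of an element. -/
def component (M : Matroid α) (e : α) : Set α :=
  {f | f ∈ M.E ∧ Relation.ReflTransGen (fun x y => ∃ C, Circuit M C ∧ x ∈ C ∧ y ∈ C) e f}

/-- The number of connected components of a matroid. -/
noncomputable def numComponents (M : Matroid α) : ℕ :=
  Set.ncard {X : Set α | ∃ e ∈ M.E, X = component M e}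

/-- A matroid is simple if all sets of at most two elements of the ground set
are independent. -/
def Simple (M : Matroid α) : Prop :=
  ∀ ⦃e f⦄, e ∈ M.E → f ∈ M.E → M.Indep {e, f}

/-- A set of edges of a complete graph is a forest if no edge is a loop and
every nonempty subset uses more vertices than it has edges. -/
def IsForest {n : ℕ} (X : Set (Sym2 (Fin n))) : Prop :=
  (∀ e ∈ X, ¬ e.IsDiag) ∧
    ∀ Y ⊆ X, Y.Nonempty → Y.ncard < {v | ∃ e ∈ Y, v ∈ e}.ncard

/-- `M` is isomorphic to the cycle matroid of the complete graph `K n`. -/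
def IsCycleMatroidK (M : Matroid α) (n : ℕ) : Prop :=
  ∃ f : α → Sym2 (Fin n), Set.BijOn f M.E {e | ¬ e.IsDiag} ∧
    ∀ I ⊆ M.E, (M.Indep I ↔ IsForest (f '' I))


section RankLemmas

variable {M : Matroid α} {I X Y F F₁ F₂ H : Set α}

lemma rkSet_bddAbove (hE : M.E.Finite) (X : Set α) :
    BddAbove {n | ∃ I, I ⊆ X ∧ M.Indep I ∧ I.ncard = n} := by
  refine ⟨M.E.ncard, ?_⟩
  rintro n ⟨I, -, hI, rfl⟩
  exact Set.ncard_le_ncard hI.subset_ground hE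

lemma ncard_le_rk (hE : M.E.Finite) (hIX : I ⊆ X) (hI : M.Indep I) :
    I.ncard ≤ rk M X :=
  le_csSup (rkSet_bddAbove hE X) ⟨I, hIX, hI, rfl⟩

lemma rk_eq_basis' (hE : M.E.Finite) (hI : M.IsBasis' I X) : rk M X = I.ncard := by
  refine le_antisymm (csSup_le ⟨0, ∅, by simp⟩ ?_) (ncard_le_rk hE hI.subset hI.indep)
  rintro n ⟨J, hJX, hJ, rfl⟩
  by_contra hlt
  push_neg at hlt
  have hIfin : I.Finite := hE.subset hI.indep.subset_ground
  have hcard : I.encard < J.encard := by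
    rw [lt_iff_not_ge]
    intro hle
    have h2 := ENat.toNat_le_toNat hle hIfin.encard_lt_top.ne
    rw [← Set.ncard_def, ← Set.ncard_def] at h2
    omega
  obtain ⟨e, heJI, hins⟩ := hI.indep.augment hJ hcard
  exact hI.insert_not_indep ⟨hJX heJI.1, heJI.2⟩ hins

lemma rk_eq_basis (hE : M.E.Finite) (hI : M.IsBasis I X) : rk M X = I.ncard :=
  rk_eq_basis' hE hI.isBasis'

lemma rk_mono (hE : M.E.Finite) (hXY : X ⊆ Y) : rk M X ≤ rk M Y := by
  obtain ⟨I, hI⟩ := M.exists_isBasis' X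
  rw [rk_eq_basis' hE hI]
  exact ncard_le_rk hE (hI.subset.trans hXY) hI.indep

lemma flat_eq_of_subset_of_rk_le (hE : M.E.Finite) (h₁ : M.IsFlat F₁) (h₂ : M.IsFlat F₂)
    (hss : F₁ ⊆ F₂) (hrk : rk M F₂ ≤ rk M F₁) : F₁ = F₂ := by
  obtain ⟨I, hI⟩ := M.exists_isBasis F₁ h₁.subset_ground
  obtain ⟨J, hJ, hIJ⟩ := hI.indep.subset_isBasis_of_subset (hI.subset.trans hss) h₂.subset_ground
  have hJfin : J.Finite := hE.subset hJ.indep.subset_ground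
  have hIJ' : I = J := by
    refine Set.eq_of_subset_of_ncard_le hIJ ?_ hJfin
    rw [← rk_eq_basis hE hJ, ← rk_eq_basis hE hI]; exact hrk
  subst hIJ'
  refine subset_antisymm hss ?_
  calc F₂ ⊆ M.closure I := hJ.subset_closure
    _ ⊆ M.closure F₁ := M.closure_subset_closure hI.subset
    _ = F₁ := h₁.closure

lemma two_le_rk (hE : M.E.Finite) (hs : Simple M) {e f : α} (hX : X ⊆ M.E)
    (he : e ∈ X) (hf : f ∈ X) (hne : e ≠ f) : 2 ≤ rk M X := by
  have hind : M.Indep {e, f} := hs (hX he) (hX hf)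
  have h2 : ({e, f} : Set α).ncard = 2 := Set.ncard_pair hne
  rw [← h2]
  exact ncard_le_rk hE (by simp [Set.insert_subset_iff, he, hf]) hind

lemma flat_inter (h₁ : M.IsFlat F₁) (h₂ : M.IsFlat F₂) : M.IsFlat (F₁ ∩ F₂) := by
  have h := Matroid.IsFlat.iInter (M := M) (Fs := fun b : Bool => bif b then F₁ else F₂)
    (by rintro (_|_) <;> simpa)
  simpa [Set.inter_eq_iInter] using h

lemma rk_restrict (hXH : X ⊆ H) : rk (M ↾ H) X = rk M X := by
  unfold rk
  congr 1
  ext n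
  constructor
  · rintro ⟨I, hIX, hI, rfl⟩
    exact ⟨I, hIX, (restrict_indep_iff.1 hI).1, rfl⟩
  · rintro ⟨I, hIX, hI, rfl⟩
    exact ⟨I, hIX, restrict_indep_iff.2 ⟨hI, hIX.trans hXH⟩, rfl⟩

lemma flat_restrict_of_flat (hH : M.IsFlat H) (hF : M.IsFlat F) (hFH : F ⊆ H) :
    (M ↾ H).IsFlat F := by
  refine ⟨fun I X hI hIX => ?_, by simpa using hFH⟩
  rw [isBasis_restrict_iff hH.subset_ground] at hI hIX
  exact hF.subset_of_isBasis_of_isBasis hI.1 hIX.1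

lemma flat_of_flat_restrict (hH : M.IsFlat H) (hF : (M ↾ H).IsFlat F) : M.IsFlat F := by
  have hFH : F ⊆ H := by simpa using hF.subset_ground
  refine ⟨fun I X hI hIX => ?_, hFH.trans hH.subset_ground⟩
  have hXH : X ⊆ H := by
    calc X ⊆ M.closure I := hIX.subset_closure
      _ ⊆ M.closure H := M.closure_subset_closure (hI.subset.trans hFH)
      _ = H := hH.closure
  have hI' : (M ↾ H).IsBasis I F := (isBasis_restrict_iff hH.subset_ground).2 ⟨hI, hFH⟩
  have hIX' : (M ↾ H).IsBasis I X := (isBasis_restrict_iff hH.subset_ground).2 ⟨hIX, hXH⟩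
  exact hF.subset_of_isBasis_of_isBasis hI' hIX'

end RankLemmas



section Counting
variable {α : Type*}

lemma bonferroni3 {A B C : Set α} (hA : A.Finite) (hB : B.Finite) (hC : C.Finite) :
    A.ncard + B.ncard + C.ncard ≤
      (A ∪ B ∪ C).ncard + ((A ∩ B).ncard + (A ∩ C).ncard + (B ∩ C).ncard) := by
  have h1 := Set.ncard_union_add_ncard_inter A B hA hB
  have h2 := Set.ncard_union_add_ncard_inter (A ∪ B) C (hA.union hB) hC
  have h3 : ((A ∪ B) ∩ C).ncard ≤ (A ∩ C).ncard + (B ∩ C).ncard := by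
    rw [Set.union_inter_distrib_right]
    exact Set.ncard_union_le _ _
  omega

lemma bonferroni4 {A B C D : Set α} (hA : A.Finite) (hB : B.Finite) (hC : C.Finite)
    (hD : D.Finite) :
    A.ncard + B.ncard + C.ncard + D.ncard ≤
      (A ∪ B ∪ C ∪ D).ncard + ((A ∩ B).ncard + (A ∩ C).ncard + (A ∩ D).ncard
        + (B ∩ C).ncard + (B ∩ D).ncard + (C ∩ D).ncard) := by
  have h1 := bonferroni3 hA hB hC
  have h2 := Set.ncard_union_add_ncard_inter (A ∪ B ∪ C) D ((hA.union hB).union hC) hD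
  have h3 : ((A ∪ B ∪ C) ∩ D).ncard ≤ (A ∩ D).ncard + (B ∩ D).ncard + (C ∩ D).ncard := by
    rw [Set.union_inter_distrib_right, Set.union_inter_distrib_right]
    calc ((A ∩ D) ∪ (B ∩ D) ∪ (C ∩ D)).ncard
        ≤ ((A ∩ D) ∪ (B ∩ D)).ncard + (C ∩ D).ncard :=
          Set.ncard_union_le _ _
      _ ≤ (A ∩ D).ncard + (B ∩ D).ncard + (C ∩ D).ncard := by
          have := Set.ncard_union_le (A ∩ D) (B ∩ D)
          omega
  omega

lemma disjoint3 {A B C Y : Set α} (hY : Y.Finite) (hAY : A ⊆ Y) (hBY : B ⊆ Y) (hCY : C ⊆ Y)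
    (hAB : Disjoint A B) (hAC : Disjoint A C) (hBC : Disjoint B C) :
    A.ncard + B.ncard + C.ncard ≤ Y.ncard := by
  have hA := hY.subset hAY
  have hB := hY.subset hBY
  have hC := hY.subset hCY
  have h1 : (A ∪ B).ncard = A.ncard + B.ncard := Set.ncard_union_eq hAB hA hB
  have h2 : (A ∪ B ∪ C).ncard = (A ∪ B).ncard + C.ncard :=
    Set.ncard_union_eq (by simp [Set.disjoint_union_left, hAC, hBC]) (hA.union hB) hC
  have h3 : (A ∪ B ∪ C).ncard ≤ Y.ncard :=
    Set.ncard_le_ncard (by simp [Set.union_subset_iff, hAY, hBY, hCY]) hY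
  omega

lemma choose2_succ (n : ℕ) : (n + 1).choose 2 = n.choose 2 + n := by
  simp [Nat.choose_succ_succ, Nat.add_comm]

lemma phi_mono (g a b : ℕ) (hab : a ≤ b) : a + g * a.choose 2 ≤ b + g * b.choose 2 :=
  Nat.add_le_add hab (Nat.mul_le_mul_left g (Nat.choose_le_choose 2 hab))


end Counting

section Core

variable {α : Type*} {g r : ℕ}

/-- Bundled hypotheses. -/
structure Good (g r : ℕ) (M : Matroid α) : Prop where
  hE : M.E.Finite
  hs : Simple M
  hrk : rk M M.E = r
  hcard : M.E.ncard = r + g * r.choose 2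
  hbound : ∀ F : Set α, M.IsFlat F → F.ncard ≤ rk M F + g * (rk M F).choose 2
  hflats : ∀ h : ℕ, 2 < h → h < r → ∀ F : Set α, M.IsFlat F → rk M F = h →
      F.ncard = h + g * h.choose 2 ∨ F.ncard ≤ h + g * (h - 1).choose 2

/-- The set of large hyperplanes. -/
def bigS (g r : ℕ) (M : Matroid α) : Set (Set α) :=
  {H : Set α | M.IsFlat H ∧ rk M H = r - 1 ∧ H.ncard = (r - 1) + g * (r - 1).choose 2}

variable {M : Matroid α} {H H₁ H₂ H₃ K : Set α}

lemma bigS_finite (hE : M.E.Finite) : (bigS g r M).Finite :=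
  (Set.Finite.finite_subsets hE).subset (fun H hH => hH.1.subset_ground)

lemma bigS_flat (hH : H ∈ bigS g r M) : M.IsFlat H := hH.1

lemma bigS_subset_ground (hH : H ∈ bigS g r M) : H ⊆ M.E := hH.1.subset_ground

/-- A large hyperplane is not the ground set, and flats of full rank equal `M.E`. -/
lemma flat_eq_ground_of_rk (hG : Good g r M) (hF : M.IsFlat F) (h : rk M F = r) : F = M.E :=
  flat_eq_of_subset_of_rk_le hG.hE hF (M.ground_isFlat) hF.subset_ground (by rw [hG.hrk, h])

/-- Basic numerical consequences of `Good`. -/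
lemma pair_inter_card (hG : Good g r M) (h₁ : H₁ ∈ bigS g r M) (h₂ : H₂ ∈ bigS g r M) :
    2 * ((r - 1) + g * (r - 1).choose 2) ≤ M.E.ncard + (H₁ ∩ H₂).ncard := by
  have hfin1 : H₁.Finite := hG.hE.subset (bigS_subset_ground h₁)
  have hfin2 : H₂.Finite := hG.hE.subset (bigS_subset_ground h₂)
  have hu := Set.ncard_union_add_ncard_inter H₁ H₂ hfin1 hfin2
  have hle : (H₁ ∪ H₂).ncard ≤ M.E.ncard :=
    Set.ncard_le_ncard (Set.union_subset (bigS_subset_ground h₁) (bigS_subset_ground h₂)) hG.hE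
  have e1 := h₁.2.2
  have e2 := h₂.2.2
  omega

/-- If a flat of rank `r-2` is contained in three distinct large hyperplanes : contradiction. -/
lemma three_hyperplanes (hr : 3 ≤ r) (hG : Good g r M)
    (h₁ : H₁ ∈ bigS g r M) (h₂ : H₂ ∈ bigS g r M) (h₃ : H₃ ∈ bigS g r M)
    (h12 : H₁ ≠ H₂) (h13 : H₁ ≠ H₃) (h23 : H₂ ≠ H₃)
    (hK : M.IsFlat K) (hKrk : rk M K = r - 2)
    (hK1 : K ⊆ H₁) (hK2 : K ⊆ H₂) (hK3 : K ⊆ H₃) : False := by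
  -- each pairwise intersection equals K
  have pair_eq : ∀ A B : Set α, A ∈ bigS g r M → B ∈ bigS g r M → A ≠ B →
      K ⊆ A → K ⊆ B → A ∩ B = K := by
    intro A B hA hB hAB hKA hKB
    have hABflat : M.IsFlat (A ∩ B) := flat_inter (bigS_flat hA) (bigS_flat hB)
    have hge : r - 2 ≤ rk M (A ∩ B) := by
      rw [← hKrk]; exact rk_mono hG.hE (Set.subset_inter hKA hKB)
    have hle : rk M (A ∩ B) ≤ r - 1 := by
      rw [← hA.2.1]; exact rk_mono hG.hE Set.inter_subset_left
    have hne : rk M (A ∩ B) ≠ r - 1 := by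
      intro hAB1
      have : A ∩ B = A := flat_eq_of_subset_of_rk_le hG.hE hABflat (bigS_flat hA)
        Set.inter_subset_left (by rw [hAB1, hA.2.1])
      have hsub : A ⊆ B := by rw [← this]; exact Set.inter_subset_right
      exact hAB (flat_eq_of_subset_of_rk_le hG.hE (bigS_flat hA) (bigS_flat hB) hsub
        (by rw [hA.2.1, hB.2.1]))
    have heq : rk M (A ∩ B) = r - 2 := by omega
    exact (flat_eq_of_subset_of_rk_le hG.hE hK hABflat (Set.subset_inter hKA hKB)
      (by rw [heq, hKrk])).symm
  have e12 := pair_eq _ _ h₁ h₂ h12 hK1 hK2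
  have e13 := pair_eq _ _ h₁ h₃ h13 hK1 hK3
  have e23 := pair_eq _ _ h₂ h₃ h23 hK2 hK3
  -- disjointness of differences
  have hdisj : ∀ A B : Set α, A ∩ B = K → Disjoint (A \ K) (B \ K) := by
    intro A B hABK
    rw [Set.disjoint_left]
    rintro x ⟨hxA, hxK⟩ ⟨hxB, -⟩
    exact hxK (hABK ▸ ⟨hxA, hxB⟩)
  have hKfin : K.Finite := hG.hE.subset (hK.subset_ground)
  have hfin1 : H₁.Finite := hG.hE.subset (bigS_subset_ground h₁)
  have hfin2 : H₂.Finite := hG.hE.subset (bigS_subset_ground h₂)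
  have hfin3 : H₃.Finite := hG.hE.subset (bigS_subset_ground h₃)
  have hsum : (H₁ \ K).ncard + (H₂ \ K).ncard + (H₃ \ K).ncard ≤ (M.E \ K).ncard :=
    disjoint3 (hG.hE.diff)
      (Set.diff_subset_diff_left (bigS_subset_ground h₁))
      (Set.diff_subset_diff_left (bigS_subset_ground h₂))
      (Set.diff_subset_diff_left (bigS_subset_ground h₃))
      (hdisj _ _ e12) (hdisj _ _ e13) (hdisj _ _ e23)
  have d1 : (H₁ \ K).ncard = H₁.ncard - K.ncard := Set.ncard_diff hK1 hKfin
  have d2 : (H₂ \ K).ncard = H₂.ncard - K.ncard := Set.ncard_diff hK2 hKfin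
  have d3 : (H₃ \ K).ncard = H₃.ncard - K.ncard := Set.ncard_diff hK3 hKfin
  have dE : (M.E \ K).ncard = M.E.ncard - K.ncard :=
    Set.ncard_diff (hK.subset_ground) hKfin
  have hK1' : K.ncard ≤ H₁.ncard := Set.ncard_le_ncard hK1 hfin1
  have hKE : K.ncard ≤ M.E.ncard := Set.ncard_le_ncard hK.subset_ground hG.hE
  -- bound on K
  have hKbound : K.ncard ≤ (r - 2) + g * (r - 2).choose 2 := by
    have := hG.hbound K hK
    rwa [hKrk] at this
  -- arithmetic
  obtain ⟨s, rfl⟩ : ∃ s, r = s + 3 := ⟨r - 3, by omega⟩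
  have c1 : (s + 3).choose 2 = s.choose 2 + 3 * s + 3 := by
    rw [choose2_succ, choose2_succ, choose2_succ]; ring
  have c2 : (s + 3 - 1).choose 2 = s.choose 2 + 2 * s + 1 := by
    have : s + 3 - 1 = s + 2 := by omega
    rw [this, choose2_succ, choose2_succ]; ring
  have c3 : (s + 3 - 2).choose 2 = s.choose 2 + s := by
    have : s + 3 - 2 = s + 1 := by omega
    rw [this, choose2_succ]
  have e1 := h₁.2.2
  have e2 := h₂.2.2
  have e3 := h₃.2.2
  have ecard := hG.hcard
  rw [c2] at e1 e2 e3
  rw [c1] at ecard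
  rw [c3] at hKbound
  have hgs : g ≤ g * s + g := by nlinarith
  have h1 : g * (s.choose 2 + 2 * s + 1) = g * s.choose 2 + g * s + g * s + g := by ring
  have h2 : g * (s.choose 2 + 3 * s + 3) = g * s.choose 2 + g * s + g * s + g * s + g + g + g := by
    ring
  have h3 : g * (s.choose 2 + s) = g * s.choose 2 + g * s := by ring
  omega

end Core

section Core2

variable {α : Type*} {g r : ℕ} {M : Matroid α} {H H₁ H₂ A : Set α}

/-- For `r ≥ 4`, the intersection of two distinct large hyperplanes has rank `r - 2`. -/
lemma pair_rank (hr : 4 ≤ r) (hG : Good g r M)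
    (h₁ : H₁ ∈ bigS g r M) (h₂ : H₂ ∈ bigS g r M) (hne : H₁ ≠ H₂) :
    rk M (H₁ ∩ H₂) = r - 2 := by
  have hABflat : M.IsFlat (H₁ ∩ H₂) := flat_inter (bigS_flat h₁) (bigS_flat h₂)
  have hle : rk M (H₁ ∩ H₂) ≤ r - 1 := by
    rw [← h₁.2.1]; exact rk_mono hG.hE Set.inter_subset_left
  have hne1 : rk M (H₁ ∩ H₂) ≠ r - 1 := by
    intro hAB1
    have heq : H₁ ∩ H₂ = H₁ := flat_eq_of_subset_of_rk_le hG.hE hABflat (bigS_flat h₁)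
      Set.inter_subset_left (by rw [hAB1, h₁.2.1])
    have hsub : H₁ ⊆ H₂ := by rw [← heq]; exact Set.inter_subset_right
    exact hne (flat_eq_of_subset_of_rk_le hG.hE (bigS_flat h₁) (bigS_flat h₂) hsub
      (by rw [h₁.2.1, h₂.2.1]))
  have hcard := pair_inter_card hG h₁ h₂
  by_contra hcon
  have hlow : rk M (H₁ ∩ H₂) ≤ r - 3 := by omega
  have hb := hG.hbound (H₁ ∩ H₂) hABflat
  have hb2 : (H₁ ∩ H₂).ncard ≤ (r - 3) + g * (r - 3).choose 2 :=
    hb.trans (phi_mono g _ _ hlow)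
  have hEcard := hG.hcard
  obtain ⟨s, rfl⟩ : ∃ s, r = s + 4 := ⟨r - 4, by omega⟩
  have c1 : (s + 4).choose 2 = s.choose 2 + 4 * s + 6 := by
    rw [choose2_succ, choose2_succ, choose2_succ, choose2_succ]; ring
  have c2 : (s + 4 - 1).choose 2 = s.choose 2 + 3 * s + 3 := by
    have h : s + 4 - 1 = s + 3 := by omega
    rw [h, choose2_succ, choose2_succ, choose2_succ]; ring
  have c3 : (s + 4 - 3).choose 2 = s.choose 2 + s := by
    have h : s + 4 - 3 = s + 1 := by omega
    rw [h, choose2_succ]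
  rw [c2] at hcard
  rw [c3] at hb2
  rw [c1] at hEcard
  have h1 : g * (s.choose 2 + 3 * s + 3) = g * s.choose 2 + g * s + g * s + g * s + g + g + g :=
    by ring
  have h2 : g * (s.choose 2 + 4 * s + 6) =
      g * s.choose 2 + g * s + g * s + g * s + g * s + g + g + g + g + g + g := by ring
  have h3 : g * (s.choose 2 + s) = g * s.choose 2 + g * s := by ring
  omega

/-- For `r ≥ 5`, the intersection of two distinct large hyperplanes is large. -/
lemma pair_large (hg : 1 ≤ g) (hr : 5 ≤ r) (hG : Good g r M)
    (h₁ : H₁ ∈ bigS g r M) (h₂ : H₂ ∈ bigS g r M) (hne : H₁ ≠ H₂) :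
    (H₁ ∩ H₂).ncard = (r - 2) + g * (r - 2).choose 2 := by
  have hrk := pair_rank (by omega) hG h₁ h₂ hne
  have hflat : M.IsFlat (H₁ ∩ H₂) := flat_inter (bigS_flat h₁) (bigS_flat h₂)
  have hdich := hG.hflats (r - 2) (by omega) (by omega) (H₁ ∩ H₂) hflat hrk
  rcases hdich with h | h
  · exact h
  exfalso
  have hcard := pair_inter_card hG h₁ h₂
  have hEcard := hG.hcard
  obtain ⟨s, rfl⟩ : ∃ s, r = s + 5 := ⟨r - 5, by omega⟩
  have c1 : (s + 5).choose 2 = s.choose 2 + 5 * s + 10 := by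
    rw [choose2_succ, choose2_succ, choose2_succ, choose2_succ, choose2_succ]; ring
  have c2 : (s + 5 - 1).choose 2 = s.choose 2 + 4 * s + 6 := by
    have hh : s + 5 - 1 = s + 4 := by omega
    rw [hh, choose2_succ, choose2_succ, choose2_succ, choose2_succ]; ring
  have c3 : (s + 5 - 2 - 1).choose 2 = s.choose 2 + 2 * s + 1 := by
    have hh : s + 5 - 2 - 1 = s + 2 := by omega
    rw [hh, choose2_succ, choose2_succ]; ring
  rw [c2] at hcard
  rw [c1] at hEcard
  rw [c3] at h
  have h1 : g * (s.choose 2 + 4 * s + 6) =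
      g * s.choose 2 + g * s + g * s + g * s + g * s + g + g + g + g + g + g := by ring
  have h2 : g * (s.choose 2 + 5 * s + 10) = g * s.choose 2 + g * s + g * s + g * s + g * s
      + g * s + g + g + g + g + g + g + g + g + g + g := by ring
  have h3 : g * (s.choose 2 + 2 * s + 1) = g * s.choose 2 + g * s + g * s + g := by ring
  omega

/-- Restriction to a large hyperplane satisfies the hypotheses one rank down. -/
lemma restrict_good (hr : 4 ≤ r) (hG : Good g r M) (hH : H ∈ bigS g r M) :
    Good g (r - 1) (M ↾ H) := by
  have hHflat := bigS_flat hH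
  have hHE : H ⊆ M.E := hHflat.subset_ground
  have hgr : (M ↾ H).E = H := by simp
  have hEfin : (M ↾ H).E.Finite := by rw [hgr]; exact hG.hE.subset hHE
  have hrkeq : ∀ X : Set α, X ⊆ H → rk (M ↾ H) X = rk M X := fun X hX => rk_restrict hX
  refine ⟨hEfin, ?_, ?_, ?_, ?_, ?_⟩
  · intro e f he hf
    rw [hgr] at he hf
    exact Matroid.restrict_indep_iff.2 ⟨hG.hs (hHE he) (hHE hf), by
      simp [Set.insert_subset_iff, he, hf]⟩
  · rw [hgr, hrkeq H Subset.rfl, hH.2.1]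
  · rw [hgr, hH.2.2]
  · intro F hF
    have hFH : F ⊆ H := by simpa [hgr] using hF.subset_ground
    have hMF : M.IsFlat F := flat_of_flat_restrict hHflat hF
    rw [hrkeq F hFH]
    exact hG.hbound F hMF
  · intro h h2 hlt F hF hrkF
    have hFH : F ⊆ H := by simpa [hgr] using hF.subset_ground
    have hMF : M.IsFlat F := flat_of_flat_restrict hHflat hF
    rw [hrkeq F hFH] at hrkF
    exact hG.hflats h h2 (by omega) F hMF hrkF

/-- The key injection bound : if `A ∈ bigS` and `W ⊆ bigS \ {A}` consists of hyperplanes whose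
intersections with `A` are large, then `W` injects into `bigS g (r-1) (M ↾ A)`. -/
lemma inj_bound (hr : 4 ≤ r) (hG : Good g r M) (hA : A ∈ bigS g r M)
    {W : Set (Set α)} (hW : W ⊆ bigS g r M) (hAW : A ∉ W)
    (hlarge : ∀ H ∈ W, (A ∩ H).ncard = (r - 2) + g * (r - 2).choose 2) :
    W.ncard ≤ (bigS g (r - 1) (M ↾ A)).ncard := by
  have hWfin : W.Finite := (bigS_finite hG.hE).subset hW
  have hmaps : ∀ H ∈ W, A ∩ H ∈ bigS g (r - 1) (M ↾ A) := by
    intro H hHW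
    have hH := hW hHW
    have hneAH : A ≠ H := fun h => hAW (h ▸ hHW)
    have hflat : M.IsFlat (A ∩ H) := flat_inter (bigS_flat hA) (bigS_flat hH)
    have hrk2 : rk M (A ∩ H) = r - 2 := pair_rank hr hG hA hH hneAH
    refine ⟨flat_restrict_of_flat (bigS_flat hA) hflat Set.inter_subset_left, ?_, ?_⟩
    · have h11 : r - 1 - 1 = r - 2 := by omega
      rw [rk_restrict Set.inter_subset_left, hrk2, h11]
    · have h11 : r - 1 - 1 = r - 2 := by omega
      rw [hlarge H hHW, h11]
  have hinj : Set.InjOn (fun H => A ∩ H) W := by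
    intro H hHW H' hH'W heq
    by_contra hne
    have hH := hW hHW
    have hH' := hW hH'W
    have hneAH : A ≠ H := fun h => hAW (h ▸ hHW)
    have hneAH' : A ≠ H' := fun h => hAW (h ▸ hH'W)
    -- K := A ∩ H is a rank-(r-2) flat inside A, H, H'
    set K := A ∩ H with hKdef
    have hflatK : M.IsFlat K := flat_inter (bigS_flat hA) (bigS_flat hH)
    have hrkK : rk M K = r - 2 := pair_rank hr hG hA hH hneAH
    have heq' : A ∩ H = A ∩ H' := heq
    exact three_hyperplanes (r := r) (by omega) hG hA hH hH' hneAH hneAH'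
      hne hflatK hrkK Set.inter_subset_left Set.inter_subset_right
      (by rw [hKdef, heq']; exact Set.inter_subset_right)
  calc W.ncard = ((fun H => A ∩ H) '' W).ncard := (Set.ncard_image_of_injOn hinj).symm
    _ ≤ (bigS g (r - 1) (M ↾ A)).ncard := by
        refine Set.ncard_le_ncard ?_ (bigS_finite ?_)
        · rintro K ⟨H, hHW, rfl⟩
          exact hmaps H hHW
        · simpa using hG.hE.subset (bigS_subset_ground hA)

end Core2

section Base3

variable {α : Type*} {g : ℕ} {M : Matroid α} {X Y : Set α}

/-- Two distinct rank-2 flats in a simple matroid meet in at most one point. -/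
lemma line_inter_le_one (hE : M.E.Finite) (hs : Simple M)
    (hX : M.IsFlat X) (hY : M.IsFlat Y) (hrX : rk M X = 2) (hrY : rk M Y = 2)
    (hne : X ≠ Y) : (X ∩ Y).ncard ≤ 1 := by
  by_contra hcon
  push_neg at hcon
  have hfin : (X ∩ Y).Finite := (hE.subset hX.subset_ground).inter_of_left Y
  obtain ⟨e, f, he, hf, hef⟩ := (Set.one_lt_ncard_iff hfin).1 hcon
  have hsub : X ∩ Y ⊆ M.E := fun x hx => hX.subset_ground hx.1
  have h2 : 2 ≤ rk M (X ∩ Y) := two_le_rk hE hs hsub he hf hef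
  have hflat : M.IsFlat (X ∩ Y) := flat_inter hX hY
  have heqX : X ∩ Y = X := flat_eq_of_subset_of_rk_le hE hflat hX
    Set.inter_subset_left (by omega)
  have hXY : X ⊆ Y := by rw [← heqX]; exact Set.inter_subset_right
  exact hne (flat_eq_of_subset_of_rk_le hE hX hY hXY (by omega))

/-- The base case `r = 3`. -/
lemma base3 (hg : 2 ≤ g) (hG : Good g 3 M) : (bigS g 3 M).ncard ≤ 3 := by
  by_contra hcon
  push_neg at hcon
  set S := bigS g 3 M with hSdef
  have hSfin : S.Finite := bigS_finite hG.hE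
  obtain ⟨S', hS'sub, hS'card⟩ := Set.exists_subset_card_eq (show 4 ≤ S.ncard by omega)
  have hS'fin : S'.Finite := hSfin.subset hS'sub
  obtain ⟨A, hA⟩ := Set.nonempty_of_ncard_ne_zero (by omega : S'.ncard ≠ 0)
  have h3 : (S' \ {A}).ncard = 3 := by
    have := Set.ncard_diff_singleton_add_one hA hS'fin
    omega
  obtain ⟨B, C, D, hBC, hBD, hCD, hBCD⟩ := Set.ncard_eq_three.1 h3
  have hB : B ∈ S' \ {A} := by rw [hBCD]; simp
  have hC : C ∈ S' \ {A} := by rw [hBCD]; simp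
  have hD : D ∈ S' \ {A} := by rw [hBCD]; simp
  have hAS : A ∈ S := hS'sub hA
  have hBS : B ∈ S := hS'sub hB.1
  have hCS : C ∈ S := hS'sub hC.1
  have hDS : D ∈ S := hS'sub hD.1
  have hAB : A ≠ B := fun h => hB.2 (by simp [← h])
  have hAC : A ≠ C := fun h => hC.2 (by simp [← h])
  have hAD : A ≠ D := fun h => hD.2 (by simp [← h])
  -- all elements of S are rank-2 flats of size 2 + g
  have hmem : ∀ X, X ∈ S → M.IsFlat X ∧ rk M X = 2 ∧ X.ncard = 2 + g := by
    intro X hX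
    obtain ⟨h1, h2, h3⟩ := hX
    refine ⟨h1, h2, ?_⟩
    rw [h3]
    have h1 : (3 - 1 : ℕ).choose 2 = 1 := by decide
    rw [h1]
    omega
  obtain ⟨hAf, hAr, hAc⟩ := hmem A hAS
  obtain ⟨hBf, hBr, hBc⟩ := hmem B hBS
  obtain ⟨hCf, hCr, hCc⟩ := hmem C hCS
  obtain ⟨hDf, hDr, hDc⟩ := hmem D hDS
  have hfinA : A.Finite := hG.hE.subset hAf.subset_ground
  have hfinB : B.Finite := hG.hE.subset hBf.subset_ground
  have hfinC : C.Finite := hG.hE.subset hCf.subset_ground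
  have hfinD : D.Finite := hG.hE.subset hDf.subset_ground
  have hbon := bonferroni4 hfinA hfinB hfinC hfinD
  have hun : (A ∪ B ∪ C ∪ D).ncard ≤ M.E.ncard := by
    refine Set.ncard_le_ncard ?_ hG.hE
    simp [Set.union_subset_iff, hAf.subset_ground, hBf.subset_ground, hCf.subset_ground,
      hDf.subset_ground]
  have hEcard : M.E.ncard = 3 + g * 3 := by
    have h := hG.hcard
    have h3 : (3 : ℕ).choose 2 = 3 := by decide
    rw [h3] at h
    exact h
  have i1 := line_inter_le_one hG.hE hG.hs hAf hBf hAr hBr hAB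
  have i2 := line_inter_le_one hG.hE hG.hs hAf hCf hAr hCr hAC
  have i3 := line_inter_le_one hG.hE hG.hs hAf hDf hAr hDr hAD
  have i4 := line_inter_le_one hG.hE hG.hs hBf hCf hBr hCr hBC
  have i5 := line_inter_le_one hG.hE hG.hs hBf hDf hBr hDr hBD
  have i6 := line_inter_le_one hG.hE hG.hs hCf hDf hCr hDr hCD
  omega

end Base3

section Rank4

variable {α : Type*} {g : ℕ} {M : Matroid α}

/-- Numerical facts for members of `bigS g 4 M`. -/
lemma bigS4_mem {X : Set α} (hX : X ∈ bigS g 4 M) :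
    M.IsFlat X ∧ rk M X = 3 ∧ X.ncard = 3 + g * 3 := by
  obtain ⟨h1, h2, h3⟩ := hX
  refine ⟨h1, h2, ?_⟩
  rw [h3]
  have : (4 - 1 : ℕ).choose 2 = 3 := by decide
  rw [this]

/-- Intersections of distinct large planes (r = 4) have at most `2 + g` points. -/
lemma inter4_le {A B : Set α} (hG : Good g 4 M) (hA : A ∈ bigS g 4 M) (hB : B ∈ bigS g 4 M)
    (hne : A ≠ B) : (A ∩ B).ncard ≤ 2 + g := by
  have hrk : rk M (A ∩ B) = 2 := pair_rank (le_refl 4) hG hA hB hne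
  have hb := hG.hbound (A ∩ B) (flat_inter (bigS_flat hA) (bigS_flat hB))
  rw [hrk] at hb
  have h2 : (2 : ℕ).choose 2 = 1 := by decide
  rw [h2] at hb
  omega

/-- Triangle inequality : sum of pairwise intersections of three distinct large planes. -/
lemma triangle4 {A B C : Set α} (hG : Good g 4 M) (hA : A ∈ bigS g 4 M) (hB : B ∈ bigS g 4 M)
    (hC : C ∈ bigS g 4 M) :
    5 + 3 * g ≤ (A ∩ B).ncard + (A ∩ C).ncard + (B ∩ C).ncard := by
  obtain ⟨hAf, -, hAc⟩ := bigS4_mem hA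
  obtain ⟨hBf, -, hBc⟩ := bigS4_mem hB
  obtain ⟨hCf, -, hCc⟩ := bigS4_mem hC
  have hfinA : A.Finite := hG.hE.subset hAf.subset_ground
  have hfinB : B.Finite := hG.hE.subset hBf.subset_ground
  have hfinC : C.Finite := hG.hE.subset hCf.subset_ground
  have hbon := bonferroni3 hfinA hfinB hfinC
  have hun : (A ∪ B ∪ C).ncard ≤ M.E.ncard := by
    refine Set.ncard_le_ncard ?_ hG.hE
    simp [Set.union_subset_iff, hAf.subset_ground, hBf.subset_ground, hCf.subset_ground]
  have hEcard : M.E.ncard = 4 + g * 6 := by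
    have h := hG.hcard
    have h4 : (4 : ℕ).choose 2 = 6 := by decide
    rw [h4] at h
    exact h
  omega

/-- No two bad partners : among three distinct large planes at most one pair is "bad". -/
lemma badUnique4 {A B C : Set α} (hG : Good g 4 M) (hA : A ∈ bigS g 4 M) (hB : B ∈ bigS g 4 M)
    (hC : C ∈ bigS g 4 M) (hAB : A ≠ B) (hAC : A ≠ C) (hBC : B ≠ C)
    (h1 : (A ∩ B).ncard ≤ 1 + g) (h2 : (A ∩ C).ncard ≤ 1 + g) : False := by
  have ht := triangle4 hG hA hB hC
  have h3 := inter4_le hG hB hC hBC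
  omega

/-- The case `r = 4`, given the result for rank 3. -/
lemma rank4 (hg : 2 ≤ g) (hG : Good g 4 M)
    (ih3 : ∀ N : Matroid α, Good g 3 N → (bigS g 3 N).ncard ≤ 3) :
    (bigS g 4 M).ncard ≤ 4 := by
  by_contra hcon
  push_neg at hcon
  set S := bigS g 4 M with hSdef
  have hSfin : S.Finite := bigS_finite hG.hE
  obtain ⟨S', hS'sub, hS'card⟩ := Set.exists_subset_card_eq (show 5 ≤ S.ncard by omega)
  have hS'fin : S'.Finite := hSfin.subset hS'sub
  -- the "bad partner" set of A within S'
  set bad : Set α → Set (Set α) := fun A => {B | B ∈ S' ∧ B ≠ A ∧ (A ∩ B).ncard ≤ 1 + g}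
    with hbaddef
  -- each bad set has at most one element
  have hbad1 : ∀ A ∈ S', ∀ B ∈ bad A, ∀ C ∈ bad A, B = C := by
    rintro A hA B ⟨hBS, hBA, hBb⟩ C ⟨hCS, hCA, hCb⟩
    by_contra hBC
    exact badUnique4 hG (hS'sub hA) (hS'sub hBS) (hS'sub hCS)
      (Ne.symm hBA) (Ne.symm hCA) hBC hBb hCb
  -- symmetry of badness
  have hsym : ∀ A B : Set α, A ∈ S' → B ∈ S' → B ∈ bad A → A ∈ bad B := by
    rintro A B hA hB ⟨-, hBA, hb⟩
    exact ⟨hA, Ne.symm hBA, by rwa [Set.inter_comm]⟩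
  -- every A ∈ S' has a bad partner
  have hpartner : ∀ A ∈ S', ∃ B, B ∈ bad A := by
    intro A hAS'
    by_contra hnone
    push_neg at hnone
    -- then all four other planes meet A in exactly 2 + g points
    have hWsub : S' \ {A} ⊆ S := fun X hX => hS'sub hX.1
    have hAW : A ∉ S' \ {A} := by simp
    have hlarge : ∀ H ∈ S' \ {A}, (A ∩ H).ncard = (4 - 2) + g * (4 - 2).choose 2 := by
      intro H hH
      have hHA : H ≠ A := hH.2
      have hle := inter4_le hG (hS'sub hAS') (hS'sub hH.1) (Ne.symm hHA)
      have hnb : H ∉ bad A := hnone H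
      have : ¬ ((A ∩ H).ncard ≤ 1 + g) := fun hb => hnb ⟨hH.1, hHA, hb⟩
      have h22 : (4 - 2 : ℕ).choose 2 = 1 := by decide
      rw [h22]
      omega
    have hinj := inj_bound (le_refl 4) hG (hS'sub hAS') hWsub hAW hlarge
    have hgood3 : Good g (4 - 1) (M ↾ A) := restrict_good (le_refl 4) hG (hS'sub hAS')
    have hle3 : (bigS g (4 - 1) (M ↾ A)).ncard ≤ 3 := ih3 (M ↾ A) hgood3
    have hWcard : (S' \ {A}).ncard = 4 := by
      have := Set.ncard_diff_singleton_add_one hAS' hS'fin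
      omega
    rw [hWcard] at hinj
    omega
  -- now the matching dance
  obtain ⟨A, hAS'⟩ := Set.nonempty_of_ncard_ne_zero (show S'.ncard ≠ 0 by omega)
  obtain ⟨B, hBbad⟩ := hpartner A hAS'
  have hBS' : B ∈ S' := hBbad.1
  have hBA : B ≠ A := hBbad.2.1
  have hABsub : {A, B} ⊆ S' := by simp [Set.insert_subset_iff, hAS', hBS']
  have hS''card : (S' \ {A, B}).ncard = 3 := by
    have hd : (S' \ {A, B}).ncard = S'.ncard - ({A, B} : Set (Set α)).ncard :=
      Set.ncard_diff hABsub (Set.Finite.insert A (Set.finite_singleton B))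
    rw [Set.ncard_pair (Ne.symm hBA)] at hd
    omega
  obtain ⟨C, D, E, hCD, hCE, hDE, hCDE⟩ := Set.ncard_eq_three.1 hS''card
  have hC : C ∈ S' \ {A, B} := by rw [hCDE]; simp
  have hD : D ∈ S' \ {A, B} := by rw [hCDE]; simp
  have hE : E ∈ S' \ {A, B} := by rw [hCDE]; simp
  have hCA : C ≠ A := fun h => hC.2 (by simp [h])
  have hCB : C ≠ B := fun h => hC.2 (by simp [h])
  have hDA : D ≠ A := fun h => hD.2 (by simp [h])
  have hDB : D ≠ B := fun h => hD.2 (by simp [h])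
  have hEA : E ≠ A := fun h => hE.2 (by simp [h])
  have hEB : E ≠ B := fun h => hE.2 (by simp [h])
  -- the partner of an element of S'' is in S''
  have hpart'' : ∀ X, X ∈ S' \ {A, B} → ∃ P, P ∈ bad X ∧ P ∈ S' \ {A, B} := by
    intro X hX
    obtain ⟨P, hP⟩ := hpartner X hX.1
    refine ⟨P, hP, hP.1, ?_⟩
    intro hPAB
    simp only [Set.mem_insert_iff, Set.mem_singleton_iff] at hPAB
    rcases hPAB with h | h
    · have hXbadA : X ∈ bad A := hsym X A hX.1 hAS' (h ▸ hP)
      have hXB := hbad1 A hAS' X hXbadA B hBbad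
      exact hX.2 (by simp [hXB])
    · have hXbadB : X ∈ bad B := hsym X B hX.1 hBS' (h ▸ hP)
      have hAbadB : A ∈ bad B := hsym A B hAS' hBS' hBbad
      have hXA := hbad1 B hBS' X hXbadB A hAbadB
      exact hX.2 (by simp [hXA])
  have memS'' : ∀ X, X ∈ S' \ {A, B} → X = C ∨ X = D ∨ X = E := by
    intro X hX
    rw [hCDE] at hX
    simpa using hX
  obtain ⟨P, hPbadC, hPS''⟩ := hpart'' C hC
  have hPC : P ≠ C := hPbadC.2.1
  have hPDE : P = D ∨ P = E := by
    rcases memS'' P hPS'' with h | h | h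
    · exact absurd h hPC
    · exact Or.inl h
    · exact Or.inr h
  obtain ⟨Q, hQbadE, hQS''⟩ := hpart'' E hE
  have hQE : Q ≠ E := hQbadE.2.1
  obtain ⟨R, hRbadD, hRS''⟩ := hpart'' D hD
  have hRD : R ≠ D := hRbadD.2.1
  rcases hPDE with h1 | h1
  · -- partner of C is D
    have hDbadC : D ∈ bad C := h1 ▸ hPbadC
    have hQCD : Q = C ∨ Q = D := by
      rcases memS'' Q hQS'' with h | h | h
      · exact Or.inl h
      · exact Or.inr h
      · exact absurd h hQE
    rcases hQCD with h2 | h2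
    · -- C ∈ bad E, so E ∈ bad C; with D ∈ bad C : E = D
      have hCbadE : C ∈ bad E := h2 ▸ hQbadE
      have hEbadC : E ∈ bad C := hsym E C hE.1 hC.1 hCbadE
      exact hDE ((hbad1 C hC.1 D hDbadC E hEbadC).symm ▸ rfl)
    · -- D ∈ bad E, so E ∈ bad D; also C ∈ bad D : E = C
      have hDbadE : D ∈ bad E := h2 ▸ hQbadE
      have hEbadD : E ∈ bad D := hsym E D hE.1 hD.1 hDbadE
      have hCbadD : C ∈ bad D := hsym C D hC.1 hD.1 hDbadC
      exact hCE (hbad1 D hD.1 C hCbadD E hEbadD)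
  · -- partner of C is E
    have hEbadC : E ∈ bad C := h1 ▸ hPbadC
    have hRCE : R = C ∨ R = E := by
      rcases memS'' R hRS'' with h | h | h
      · exact Or.inl h
      · exact absurd h hRD
      · exact Or.inr h
    rcases hRCE with h2 | h2
    · -- C ∈ bad D, so D ∈ bad C; with E ∈ bad C : D = E
      have hCbadD : C ∈ bad D := h2 ▸ hRbadD
      have hDbadC : D ∈ bad C := hsym D C hD.1 hC.1 hCbadD
      exact hDE (hbad1 C hC.1 D hDbadC E hEbadC)
    · -- E ∈ bad D, so D ∈ bad E; also C ∈ bad E : D = C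
      have hEbadD : E ∈ bad D := h2 ▸ hRbadD
      have hDbadE : D ∈ bad E := hsym D E hD.1 hE.1 hEbadD
      have hCbadE : C ∈ bad E := hsym C E hC.1 hE.1 hEbadC
      exact hCD (hbad1 E hE.1 C hCbadE D hDbadE)
end Rank4

section Main

variable {α : Type*} {g : ℕ}

lemma aux (hg : 2 ≤ g) : ∀ r : ℕ, 3 ≤ r → ∀ M : Matroid α, Good g r M →
    (bigS g r M).ncard ≤ r := by
  intro r
  induction r using Nat.strong_induction_on with
  | _ r ih =>
    intro hr M hG
    rcases eq_or_lt_of_le hr with h3 | h4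
    · exact h3 ▸ base3 hg (h3 ▸ hG)
    rcases eq_or_lt_of_le (show 4 ≤ r by omega) with h4' | h5
    · refine h4' ▸ rank4 hg (h4' ▸ hG) (fun N hN => ?_)
      exact ih 3 (by omega) (by omega) N hN
    -- r ≥ 5
    have hr5 : 5 ≤ r := h5
    rcases Set.eq_empty_or_nonempty (bigS g r M) with hemp | ⟨A, hA⟩
    · rw [hemp]; simp
    have hSfin : (bigS g r M).Finite := bigS_finite hG.hE
    have hWsub : bigS g r M \ {A} ⊆ bigS g r M := Set.diff_subset
    have hAW : A ∉ bigS g r M \ {A} := by simp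
    have hlarge : ∀ H ∈ bigS g r M \ {A}, (A ∩ H).ncard = (r - 2) + g * (r - 2).choose 2 := by
      intro H hH
      exact pair_large (by omega) hr5 hG hA (hWsub hH) (fun h => hH.2 (by simp [← h]))
    have hinj := inj_bound (by omega) hG hA hWsub hAW hlarge
    have hgood : Good g (r - 1) (M ↾ A) := restrict_good (by omega) hG hA
    have hle : (bigS g (r - 1) (M ↾ A)).ncard ≤ r - 1 :=
      ih (r - 1) (by omega) (by omega) (M ↾ A) hgood
    have hcard := Set.ncard_diff_singleton_add_one hA hSfin
    omega

end Main


/-- a simple rank-`r` matroid satisfying the Dowling-type flat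
size conditions has at most `r` hyperplanes of size `(r−1) + g·(r−1 choose 2)`. -/
theorem dowling_hyperplanes_bound (g r : ℕ) (hg : 2 ≤ g) (hr : 3 ≤ r)
    (M : Matroid α) (hE : M.E.Finite) (hs : Simple M) (hrk : rk M M.E = r)
    (hcard : M.E.ncard = r + g * r.choose 2)
    (hbound : ∀ F : Set α, M.IsFlat F → F.ncard ≤ rk M F + g * (rk M F).choose 2)
    (hflats : ∀ h : ℕ, 2 < h → h < r → ∀ F : Set α, M.IsFlat F → rk M F = h →
      F.ncard = h + g * h.choose 2 ∨ F.ncard ≤ h + g * (h - 1).choose 2) :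
    Set.ncard {H : Set α | M.IsFlat H ∧ rk M H = r - 1 ∧
      H.ncard = (r - 1) + g * (r - 1).choose 2} ≤ r := by
  have hG : Good g r M := ⟨hE, hs, hrk, hcard, hbound, hflats⟩
  exact aux hg r hr M hG

end MatroidPaper
end

section
/- Fix integers r ≥ 3 and t ≥ 2. Let M be a rank-r matroid on (r−1)t + 1 elements in which every rank-i flat (1 ≤ i ≤ r) has at most (i−1)t + 1 elements. Then M has at most r − 1 hyperplanes of size (r−2)t + 1; moreover, if H_i and H_j are distinct such hyperplanes, then H_i ∩ H_j is a flat of rank r − 2 with (r−3)t + 1 elements and H_i ∪ H_j = E(M). -/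
open Set Matroid
open scoped Matroid

namespace MatroidPaper

variable {α : Type*} {β : Type*}

lemma rk_bddAbove {M : Matroid α} (hE : M.E.Finite) (X : Set α) :
    BddAbove {n | ∃ I, I ⊆ X ∧ M.Indep I ∧ I.ncard = n} := by
  refine ⟨M.E.ncard, ?_⟩
  rintro n ⟨I, hIX, hI, rfl⟩
  exact Set.ncard_le_ncard hI.subset_ground hE

lemma rk_nonempty (M : Matroid α) (X : Set α) :
    {n | ∃ I, I ⊆ X ∧ M.Indep I ∧ I.ncard = n}.Nonempty :=
  ⟨0, ∅, empty_subset X, M.empty_indep, by simp⟩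

lemma le_rk_of_indep {M : Matroid α} {I X : Set α} (hE : M.E.Finite) (hIX : I ⊆ X)
    (hI : M.Indep I) : I.ncard ≤ rk M X :=
  le_csSup (rk_bddAbove hE X) ⟨I, hIX, hI, rfl⟩

lemma rk_eq_of_basis {M : Matroid α} {I X : Set α} (hE : M.E.Finite) (hI : M.IsBasis I X) :
    rk M X = I.ncard := by
  refine le_antisymm (csSup_le (rk_nonempty M X) ?_) (le_rk_of_indep hE hI.subset hI.indep)
  rintro n ⟨J, hJX, hJ, rfl⟩
  obtain ⟨J', hJ', hJJ'⟩ := hJ.subset_isBasis_of_subset hJX hI.subset_ground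
  have hcard := hJ'.encard_eq_encard hI
  calc J.ncard ≤ J'.ncard := Set.ncard_le_ncard hJJ' (hE.subset hJ'.indep.subset_ground)
    _ = I.ncard := by rw [Set.ncard, Set.ncard, hcard]

lemma exists_indep_ncard_rk {M : Matroid α} (hE : M.E.Finite) (X : Set α) :
    ∃ I, I ⊆ X ∧ M.Indep I ∧ I.ncard = rk M X :=
  Nat.sSup_mem (rk_nonempty M X) (rk_bddAbove hE X)

lemma rk_lt_of_flat_ssubset {M : Matroid α} {F F' : Set α} (hE : M.E.Finite) (hF : M.IsFlat F)
    (hss : F ⊂ F') (hF'E : F' ⊆ M.E) : rk M F < rk M F' := by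
  obtain ⟨I, hI⟩ := M.exists_isBasis F (hss.subset.trans hF'E)
  obtain ⟨e, heF', heF⟩ := exists_of_ssubset hss
  have heI : e ∉ I := fun h => heF (hI.subset h)
  have hecl : e ∉ M.closure I := by
    rw [hI.closure_eq_closure, hF.closure]; exact heF
  have hins : M.Indep (insert e I) := by
    rw [hI.indep.insert_indep_iff_of_notMem heI]
    exact ⟨hF'E heF', hecl⟩
  have h1 : (insert e I).ncard = I.ncard + 1 :=
    Set.ncard_insert_of_notMem heI (hE.subset hI.indep.subset_ground)
  have h2 := le_rk_of_indep hE (insert_subset heF' (hI.subset.trans hss.subset)) hins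
  rw [rk_eq_of_basis hE hI]
  omega

lemma closure_flat' (M : Matroid α) (X : Set α) : M.IsFlat (M.closure X) := by
  rw [Matroid.closure_def]
  have hne : Nonempty {F // M.IsFlat F ∧ X ∩ M.E ⊆ F} :=
    ⟨⟨M.E, M.ground_isFlat, inter_subset_right⟩⟩
  have h := Matroid.IsFlat.iInter (M := M)
    (Fs := fun F : {F // M.IsFlat F ∧ X ∩ M.E ⊆ F} => F.1) (fun F => F.2.1)
  rwa [sInter_eq_iInter]

lemma flat_inter_s17 {M : Matroid α} {F F' : Set α} (hF : M.IsFlat F) (hF' : M.IsFlat F') :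
    M.IsFlat (F ∩ F') := by
  have h := Matroid.IsFlat.iInter (M := M) (Fs := fun b : Bool => cond b F F') (by
    rintro (b | b) <;> assumption)
  have h2 : (⋂ b : Bool, cond b F F') = F ∩ F' := by
    ext x; simp [Bool.forall_bool, and_comm]
  rwa [h2] at h

/-- a rank-`r` matroid on `(r−1)t + 1` elements whose rank-`i`
flats have at most `(i−1)t + 1` elements has at most `r − 1` hyperplanes of size
`(r−2)t + 1`; two distinct such hyperplanes intersect in a rank-`(r−2)` flat of
size `(r−3)t + 1` and their union is the ground set. -/
theorem spike_hyperplanes_bound (r t : ℕ) (hr : 3 ≤ r) (ht : 2 ≤ t)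
    (M : Matroid α) (hE : M.E.Finite) (hrk : rk M M.E = r)
    (hcard : M.E.ncard = (r - 1) * t + 1)
    (hflats : ∀ i : ℕ, 1 ≤ i → i ≤ r → ∀ F : Set α, M.IsFlat F → rk M F = i →
      F.ncard ≤ (i - 1) * t + 1) :
    Set.ncard {H : Set α | M.IsFlat H ∧ rk M H = r - 1 ∧
      H.ncard = (r - 2) * t + 1} ≤ r - 1 ∧
    ∀ H H' : Set α,
      (M.IsFlat H ∧ rk M H = r - 1 ∧ H.ncard = (r - 2) * t + 1) →
      (M.IsFlat H' ∧ rk M H' = r - 1 ∧ H'.ncard = (r - 2) * t + 1) → H ≠ H' →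
        M.IsFlat (H ∩ H') ∧ rk M (H ∩ H') = r - 2 ∧
          (H ∩ H').ncard = (r - 3) * t + 1 ∧ H ∪ H' = M.E := by
  obtain ⟨a, rfl⟩ : ∃ a, r = a + 3 := ⟨r - 3, by omega⟩
  have s1 : a + 3 - 1 = a + 2 := by omega
  have s2 : a + 3 - 2 = a + 1 := by omega
  have s3 : a + 3 - 3 = a := by omega
  obtain ⟨p, hp⟩ : ∃ p, a * t = p := ⟨_, rfl⟩
  have m1 : (a + 1) * t = p + t := by rw [← hp]; ring
  have m2 : (a + 2) * t = p + 2 * t := by rw [← hp]; ring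
  have m3 : (a + 3) * t = p + 3 * t := by rw [← hp]; ring
  simp only [s1, s2, s3, m1, m2, hp] at hcard ⊢
  have ht0 : 0 < t := by omega
  -- the pairwise statement
  have key : ∀ H H' : Set α,
      (M.IsFlat H ∧ rk M H = a + 2 ∧ H.ncard = p + t + 1) →
      (M.IsFlat H' ∧ rk M H' = a + 2 ∧ H'.ncard = p + t + 1) → H ≠ H' →
      M.IsFlat (H ∩ H') ∧ rk M (H ∩ H') = a + 1 ∧ (H ∩ H').ncard = p + 1 ∧
        H ∪ H' = M.E := by
    rintro H H' ⟨hH, hHr, hHc⟩ ⟨hH', hH'r, hH'c⟩ hne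
    have hHE := hH.subset_ground
    have hH'E := hH'.subset_ground
    have hFlat := flat_inter_s17 hH hH'
    have hne2 : H ∩ H' ≠ H := by
      intro hEq
      have hsub : H ⊆ H' := Set.inter_eq_left.mp hEq
      have hlt : rk M H < rk M H' :=
        rk_lt_of_flat_ssubset hE hH ⟨hsub, fun h => hne (hsub.antisymm h)⟩ hH'E
      omega
    have hssub : H ∩ H' ⊂ H := Set.inter_subset_left.ssubset_of_ne hne2
    have hlt : rk M (H ∩ H') < a + 2 := by
      have h := rk_lt_of_flat_ssubset hE hFlat hssub hHE
      omega
    have hIE : (H ∩ H').ncard + (H ∪ H').ncard = H.ncard + H'.ncard :=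
      Set.ncard_inter_add_ncard_union H H' (hE.subset hHE) (hE.subset hH'E)
    have hUle : (H ∪ H').ncard ≤ M.E.ncard :=
      Set.ncard_le_ncard (union_subset hHE hH'E) hE
    have hlow : p + 1 ≤ (H ∩ H').ncard := by omega
    -- rank of intersection is at least 1
    have hone : 1 ≤ rk M (H ∩ H') := by
      by_contra h0
      push_neg at h0
      obtain ⟨x, hx⟩ : (H ∩ H').Nonempty := by
        apply Set.nonempty_of_ncard_ne_zero; omega
      have hxE : x ∈ M.E := hHE hx.1
      have hxdep : ¬ M.Indep {x} := by
        intro hxi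
        have := le_rk_of_indep hE (singleton_subset_iff.mpr hx) hxi
        simp [Set.ncard_singleton] at this
        omega
      obtain ⟨I, hIE2, hIi, hIc⟩ := exists_indep_ncard_rk hE M.E
      obtain ⟨e, heI⟩ : I.Nonempty := by
        apply Set.nonempty_of_ncard_ne_zero; omega
      have hei : M.Indep {e} := hIi.subset (singleton_subset_iff.mpr heI)
      have heE : e ∈ M.E := hIE2 heI
      have hxe : x ≠ e := by rintro rfl; exact hxdep hei
      have hbas : M.IsBasis {e} (M.closure {e}) := hei.isBasis_closure
      have hrk1 : rk M (M.closure {e}) = 1 := by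
        rw [rk_eq_of_basis hE hbas, Set.ncard_singleton]
      have hbound := hflats 1 le_rfl (by omega) (M.closure {e}) (closure_flat' M {e}) hrk1
      simp only [Nat.sub_self, Nat.zero_mul, Nat.zero_add] at hbound
      have hxcl : x ∈ M.closure {e} := by
        by_contra hxcl
        have hxI : x ∉ ({e} : Set α) := by simp [hxe]
        have : M.Indep (insert x {e}) := by
          rw [hei.insert_indep_iff_of_notMem hxI]
          exact ⟨hxE, hxcl⟩
        exact hxdep (this.subset (by simp))
      have hecl : e ∈ M.closure {e} := M.mem_closure_self e heE
      have hsub2 : ({e, x} : Set α) ⊆ M.closure {e} := by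
        rintro y (rfl | rfl) <;> assumption
      have h2 : ({e, x} : Set α).ncard = 2 := Set.ncard_pair (Ne.symm hxe)
      have := Set.ncard_le_ncard hsub2 (hE.subset (M.closure_subset_ground {e}))
      omega
    -- pin down the rank
    set i := rk M (H ∩ H') with hi
    obtain ⟨q, hq⟩ : ∃ q, (i - 1) * t = q := ⟨_, rfl⟩
    have hbound := hflats i hone (by omega) (H ∩ H') hFlat rfl
    rw [hq] at hbound
    have hai : a ≤ i - 1 := by
      have hpq : a * t ≤ (i - 1) * t := by rw [hp, hq]; omega
      exact Nat.le_of_mul_le_mul_right hpq ht0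
    have hieq : i = a + 1 := by omega
    have hbound2 := hflats (a + 1) (by omega) (by omega) (H ∩ H') hFlat hieq
    simp only [Nat.add_sub_cancel, hp] at hbound2
    have hceq : (H ∩ H').ncard = p + 1 := by omega
    have hUeq : H ∪ H' = M.E := by
      apply Set.eq_of_subset_of_ncard_le (union_subset hHE hH'E) _ hE
      omega
    exact ⟨hFlat, hieq, hceq, hUeq⟩
  refine ⟨?_, key⟩
  classical
  set S := {H : Set α | M.IsFlat H ∧ rk M H = a + 2 ∧ H.ncard = p + t + 1} with hS
  have hSfin : S.Finite := hE.finite_subsets.subset fun H hH => hH.1.subset_ground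
  have hcardS : S.ncard = hSfin.toFinset.card := Set.ncard_eq_toFinset_card S hSfin
  set 𝒮 := hSfin.toFinset with h𝒮
  set f : Set α → Finset α := fun H => hE.toFinset.filter (fun x => x ∉ H) with hf
  have hfcoe : ∀ H : Set α, (f H : Set α) = M.E \ H := by
    intro H; ext x; simp [hf, Set.mem_diff]
  have hfcard : ∀ H ∈ 𝒮, (f H).card = t := by
    intro H hH
    rw [hSfin.mem_toFinset] at hH
    have hHE : H ⊆ M.E := hH.1.subset_ground
    have h1 : (f H).card = (M.E \ H).ncard := by
      rw [← hfcoe H, Set.ncard_coe_finset]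
    rw [h1, Set.ncard_diff hHE (hE.subset hHE), hcard, hH.2.2]
    omega
  have hdisj : ∀ H ∈ 𝒮, ∀ H' ∈ 𝒮, H ≠ H' → Disjoint (f H) (f H') := by
    intro H hH H' hH' hne
    rw [hSfin.mem_toFinset] at hH hH'
    have hU := (key H H' hH hH' hne).2.2.2
    rw [Finset.disjoint_left]
    intro x hx hx'
    have hx1 : x ∈ M.E \ H := by rw [← hfcoe H]; exact_mod_cast hx
    have hx2 : x ∈ M.E \ H' := by rw [← hfcoe H']; exact_mod_cast hx'
    have : x ∈ H ∪ H' := hU ▸ hx1.1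
    rcases this with h | h
    · exact hx1.2 h
    · exact hx2.2 h
  have hbU : (𝒮.biUnion f).card = 𝒮.card * t := by
    rw [Finset.card_biUnion hdisj, Finset.sum_congr rfl hfcard, Finset.sum_const,
      smul_eq_mul]
  have hsub : 𝒮.biUnion f ⊆ hE.toFinset := by
    intro x hx
    simp only [Finset.mem_biUnion] at hx
    obtain ⟨H, _, hx⟩ := hx
    exact (Finset.mem_filter.mp hx).1
  have hle : 𝒮.card * t ≤ M.E.ncard := by
    rw [← hbU, Set.ncard_eq_toFinset_card _ hE]
    exact Finset.card_le_card hsub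
  rw [hcardS]
  by_contra hgt
  push_neg at hgt
  have hmul : (a + 3) * t ≤ 𝒮.card * t := Nat.mul_le_mul_right t (by omega)
  rw [m3] at hmul
  omega


end MatroidPaper
end
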